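/- arXiv:2010.04838 — 5 statements merged into one kernel-verified Lean document; each statement's English description precedes it below -/
import Mathlib

section
/- Let (Ω, ℱ, P) be a probability space, 𝒢 ⊆ ℱ a sub-σ-algebra, K ≥ 1, and X₁, …, X_K : Ω → ℝⁿ square-integrable random vectors such that almost everywhere: (i) E[X_k | 𝒢] = E[X₁ | 𝒢] for all k; (ii) E[‖X_k‖² | 𝒢] = E[‖X₁‖² | 𝒢] for all k; (iii) E[⟨X_j, X_k⟩ | 𝒢] = ‖E[X₁ | 𝒢]‖² for all j ≠ k (conditional uncorrelatedness given 𝒢). Let X̄ = (1/K) Σ_{k=1}^K X_k and m = E[X₁]. Then E[‖X̄ − m‖²] = (1/K)·E[ E[‖X₁‖² | 𝒢] − ‖E[X₁ | 𝒢]‖² ] + E[‖E[X₁ | 𝒢] − m‖²]. (This is the single-minibatch case B = 1 of Proposition 3: the trace variance of the K-sample Gumbel-Rao Monte Carlo estimator equals the expected conditional trace variance divided by K plus the trace variance of the fully Rao-Blackwellized estimator.) -/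
/-!
By the tower property every hypothesis becomes an equality of unconditional moments: all `X k`
have mean `m`, and `E⟪X j, X k⟫` equals `a := E‖X₁‖²` for `j = k` and `b := E‖E[X₁|𝒢]‖²` for
`j ≠ k`. Expanding the square gives `E‖X̄‖² = b + (a - b) / K`, and since `E‖Z - m‖² = E‖Z‖² - ‖m‖²`
whenever `E Z = m`, both sides of the identity equal `b + (a - b) / K - ‖m‖²`.
-/

open MeasureTheory
open scoped RealInnerProductSpace

namespace MeasureTheory

theorem integral_eq_of_condExp_ae_eq {Ω F : Type*} {m m₀ : MeasurableSpace Ω} {μ : Measure Ω}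
    [NormedAddCommGroup F] [NormedSpace ℝ F] [CompleteSpace F] [IsFiniteMeasure μ]
    (hm : m ≤ m₀) {f g : Ω → F} (h : μ[f|m] =ᵐ[μ] g) :
    ∫ ω, f ω ∂μ = ∫ ω, g ω ∂μ :=
  (integral_condExp hm).symm.trans (integral_congr_ae h)

variable {Ω E : Type*} {m₀ : MeasurableSpace Ω} {μ : Measure Ω}
  [NormedAddCommGroup E] [InnerProductSpace ℝ E]

theorem MemLp.integrable_inner {f g : Ω → E} (hf : MemLp f 2 μ) (hg : MemLp g 2 μ) :
    Integrable (fun ω => ⟪f ω, g ω⟫) μ :=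
  memLp_one_iff_integrable.1 ((innerSL ℝ).memLp_of_bilin 1 hf hg)

theorem integral_norm_sum_sq {ι : Type*} [Fintype ι] {X : ι → Ω → E}
    (hX : ∀ i, MemLp (X i) 2 μ) :
    ∫ ω, ‖∑ i, X i ω‖ ^ 2 ∂μ = ∑ i, ∑ j, ∫ ω, ⟪X i ω, X j ω⟫ ∂μ := by
  have hint : ∀ i j, Integrable (fun ω => ⟪X i ω, X j ω⟫) μ :=
    fun i j => (hX i).integrable_inner (hX j)
  simp_rw [← real_inner_self_eq_norm_sq, sum_inner, inner_sum]
  rw [integral_finsetSum _ fun i _ => integrable_finsetSum _ fun j _ => hint i j]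
  exact Finset.sum_congr rfl fun i _ => integral_finsetSum _ fun j _ => hint i j

theorem integral_norm_average_sq {ι : Type*} [Fintype ι] [DecidableEq ι] [Nonempty ι]
    {X : ι → Ω → E} (hX : ∀ i, MemLp (X i) 2 μ) {a b : ℝ}
    (hinner : ∀ i j, ∫ ω, ⟪X i ω, X j ω⟫ ∂μ = if i = j then a else b) :
    ∫ ω, ‖(Fintype.card ι : ℝ)⁻¹ • ∑ i, X i ω‖ ^ 2 ∂μ
      = b + (Fintype.card ι : ℝ)⁻¹ * (a - b) := by
  have hN : (Fintype.card ι : ℝ) ≠ 0 := by positivity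
  have hite : ∀ i j : ι, (if i = j then a else b) = b + if i = j then a - b else 0 := by
    intro i j; split_ifs <;> ring
  simp_rw [norm_smul, mul_pow, Real.norm_eq_abs, sq_abs]
  rw [integral_const_mul, integral_norm_sum_sq hX]
  simp only [hinner, hite, Finset.sum_add_distrib, Finset.sum_ite_eq, Finset.mem_univ, if_true,
    Finset.sum_const, Finset.card_univ, nsmul_eq_mul]
  field_simp

variable [CompleteSpace E]

theorem integral_norm_sub_sq_of_integral_eq [IsProbabilityMeasure μ] {f : Ω → E}
    (hf : MemLp f 2 μ) {c : E} (hc : ∫ ω, f ω ∂μ = c) :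
    ∫ ω, ‖f ω - c‖ ^ 2 ∂μ = ∫ ω, ‖f ω‖ ^ 2 ∂μ - ‖c‖ ^ 2 := by
  have hf₁ : Integrable f μ := hf.integrable one_le_two
  have hfc : Integrable (fun ω => 2 * ⟪c, f ω⟫) μ := (hf₁.const_inner c).const_mul 2
  have hsq : Integrable (fun ω => ‖f ω‖ ^ 2 - 2 * ⟪c, f ω⟫) μ :=
    (hf.integrable_norm_pow two_ne_zero).sub hfc
  simp_rw [norm_sub_sq_real, real_inner_comm c]
  rw [integral_add hsq (integrable_const _),
    integral_sub (hf.integrable_norm_pow two_ne_zero) hfc, integral_const_mul, integral_inner hf₁,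
    hc, real_inner_self_eq_norm_sq]
  simp only [integral_const, probReal_univ, smul_eq_mul, one_mul]
  ring

end MeasureTheory

/-- **Proposition 3, single-minibatch case (B = 1).** If `X₁, …, X_K` are square-integrable
random vectors that, conditionally on a sub-σ-algebra `𝒢`, share a common conditional mean and
conditional second moment and are pairwise conditionally uncorrelated, then the trace variance
of their average decomposes as (expected conditional trace variance)/K plus the trace variance
of the conditional mean:
`E[‖X̄ − m‖²] = (1/K)·E[E[‖X₁‖²|𝒢] − ‖E[X₁|𝒢]‖²] + E[‖E[X₁|𝒢] − m‖²]`. -/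
theorem average_var_decomposition {Ω : Type*} {ℱ : MeasurableSpace Ω} (μ : Measure Ω)
    [IsProbabilityMeasure μ] (𝒢 : MeasurableSpace Ω) (h𝒢 : 𝒢 ≤ ℱ)
    (n K : ℕ) (hK : 1 ≤ K)
    (X : Fin K → Ω → EuclideanSpace ℝ (Fin n))
    (hX : ∀ k, MemLp (X k) 2 μ)
    (hmean : ∀ k, (μ[X k|𝒢]) =ᵐ[μ] (μ[X ⟨0, hK⟩|𝒢]))
    (hsecond : ∀ k,
      (μ[fun ω => ‖X k ω‖ ^ 2|𝒢]) =ᵐ[μ] (μ[fun ω => ‖X ⟨0, hK⟩ ω‖ ^ 2|𝒢]))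
    (huncorr : ∀ j k, j ≠ k →
      (μ[fun ω => ⟪X j ω, X k ω⟫|𝒢]) =ᵐ[μ] fun ω => ‖(μ[X ⟨0, hK⟩|𝒢]) ω‖ ^ 2) :
    ∫ ω, ‖(K : ℝ)⁻¹ • ∑ k, X k ω - ∫ ω', X ⟨0, hK⟩ ω' ∂μ‖ ^ 2 ∂μ
      = (K : ℝ)⁻¹ *
          ∫ ω, ((μ[fun ω' => ‖X ⟨0, hK⟩ ω'‖ ^ 2|𝒢]) ω - ‖(μ[X ⟨0, hK⟩|𝒢]) ω‖ ^ 2) ∂μ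
        + ∫ ω, ‖(μ[X ⟨0, hK⟩|𝒢]) ω - ∫ ω', X ⟨0, hK⟩ ω' ∂μ‖ ^ 2 ∂μ := by
  have : NeZero K := ⟨by omega⟩
  set X₀ := X ⟨0, hK⟩
  set Y := μ[X₀|𝒢]
  have hY : MemLp Y 2 μ := (hX _).condExp one_le_two
  have hmean_eq : ∀ k, ∫ ω, X k ω ∂μ = ∫ ω, X₀ ω ∂μ := fun k =>
    (integral_eq_of_condExp_ae_eq h𝒢 (hmean k)).trans (integral_condExp h𝒢)
  have hinner : ∀ j k, ∫ ω, ⟪X j ω, X k ω⟫ ∂μ =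
      if j = k then ∫ ω, ‖X₀ ω‖ ^ 2 ∂μ else ∫ ω, ‖Y ω‖ ^ 2 ∂μ := by
    intro j k
    split_ifs with hjk
    · subst hjk
      simp_rw [real_inner_self_eq_norm_sq]
      exact (integral_eq_of_condExp_ae_eq h𝒢 (hsecond j)).trans (integral_condExp h𝒢)
    · exact integral_eq_of_condExp_ae_eq h𝒢 (huncorr j k hjk)
  have haverage := integral_norm_average_sq hX hinner
  rw [Fintype.card_fin] at haverage
  have hXbar : MemLp (fun ω => (K : ℝ)⁻¹ • ∑ k, X k ω) 2 μ :=
    (memLp_finsetSum Finset.univ fun k _ => hX k).const_smul (K : ℝ)⁻¹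
  have hXbar_mean : ∫ ω, (K : ℝ)⁻¹ • ∑ k, X k ω ∂μ = ∫ ω, X₀ ω ∂μ := by
    rw [integral_smul, integral_finsetSum _ fun k _ => (hX k).integrable one_le_two]
    simp only [hmean_eq, Finset.sum_const, Finset.card_univ, Fintype.card_fin,
      ← Nat.cast_smul_eq_nsmul ℝ]
    exact inv_smul_smul₀ (by positivity) _
  rw [integral_norm_sub_sq_of_integral_eq hXbar hXbar_mean,
    integral_norm_sub_sq_of_integral_eq hY (integral_condExp h𝒢), haverage,
    integral_sub integrable_condExp (hY.integrable_norm_pow two_ne_zero), integral_condExp h𝒢]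
  ring
end

section
/- Let n ≥ 1, Q ∈ ℝ^{n×n}, c ∈ ℝⁿ, and let p ∈ ℝⁿ satisfy p_i ≥ 0 and Σ_{i=1}^n p_i = 1. Assume p_i − 2·p_i·c_i + c_i² ≠ 0 for all i and c_i·c_j − p_i·c_j − c_i·p_j ≠ 0 for all i ≠ j. Define the matrix A(p) by A_{ii}(p) = ((p_i − c_i)²/(p_i − 2·p_i·c_i + c_i²))·Q_{ii} and A_{ij}(p) = ((p_i − c_i)(p_j − c_j)/(c_i·c_j − p_i·c_j − c_i·p_j))·Q_{ij} for i ≠ j. Let D be a random vector taking the value e_i (the i-th standard basis vector of ℝⁿ) with probability p_i. Then E[(D − c)ᵀ A(p) (D − c)] = (p − c)ᵀ Q (p − c). (This is the stochastic reformulation of the quadratic program over the simplex used in the paper's toy experiment.) -/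
open Matrix

/-- **Stochastic reformulation of the quadratic program over the simplex** (toy experiment of
the paper). With `A(p)` defined entrywise from `Q`, `c`, `p` as in the paper, the expectation
of the quadratic form `(D − c)ᵀ A(p) (D − c)` over a categorical variable `D` taking value
`e_i` with probability `p_i` equals `(p − c)ᵀ Q (p − c)`. -/
theorem quadratic_program_stochastic_reformulation
    (n : ℕ) (hn : 1 ≤ n) (Q : Matrix (Fin n) (Fin n) ℝ) (c p : Fin n → ℝ)
    (hp_nonneg : ∀ i, 0 ≤ p i) (hp_sum : ∑ i, p i = 1)
    (hdiag : ∀ i, p i - 2 * p i * c i + c i ^ 2 ≠ 0)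
    (hoff : ∀ i j, i ≠ j → c i * c j - p i * c j - c i * p j ≠ 0)
    (A : Matrix (Fin n) (Fin n) ℝ)
    (hA : ∀ i j, A i j =
      if i = j then (p i - c i) ^ 2 / (p i - 2 * p i * c i + c i ^ 2) * Q i i
      else (p i - c i) * (p j - c j) / (c i * c j - p i * c j - c i * p j) * Q i j) :
    ∑ i, p i * ((Pi.single i 1 - c) ⬝ᵥ A.mulVec (Pi.single i 1 - c))
      = (p - c) ⬝ᵥ Q.mulVec (p - c) := by

  have key : ∀ k l : Fin n,
      (∑ i, p i * ((if k = i then (1:ℝ) else 0) - c k) * ((if l = i then (1:ℝ) else 0) - c l))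
        * A k l = (p k - c k) * (p l - c l) * Q k l := by
    intro k l
    have hT : (∑ i, p i * ((if k = i then (1:ℝ) else 0) - c k) * ((if l = i then (1:ℝ) else 0) - c l))
        = (if k = l then p k - 2 * p k * c k + c k ^ 2
           else c k * c l - p k * c l - c k * p l) := by
      by_cases hkl : k = l
      · subst hkl
        simp only [if_pos rfl]
        have : ∀ i, p i * ((if k = i then (1:ℝ) else 0) - c k) * ((if k = i then (1:ℝ) else 0) - c k)
            = (if k = i then p i * (1 - 2 * c k) else 0) + p i * (c k ^ 2) := by
          intro i; by_cases h : k = i <;> simp [h] <;> ring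
        rw [Finset.sum_congr rfl fun i _ => this i, Finset.sum_add_distrib,
          Finset.sum_ite_eq Finset.univ k, ← Finset.sum_mul, hp_sum]
        simp; ring
      · simp only [if_neg hkl]
        have : ∀ i, p i * ((if k = i then (1:ℝ) else 0) - c k) * ((if l = i then (1:ℝ) else 0) - c l)
            = ((if k = i then p i * (-c l) else 0) + (if l = i then p i * (-c k) else 0))
              + p i * (c k * c l) := by
          intro i
          by_cases h1 : k = i
          · have h2 : l ≠ i := fun h => hkl (h1.trans h.symm)
            simp [h1, if_neg h2]; ring
          · by_cases h2 : l = i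
            · simp [if_neg h1, h2]; ring
            · simp [if_neg h1, if_neg h2]; ring
        rw [Finset.sum_congr rfl fun i _ => this i, Finset.sum_add_distrib,
          Finset.sum_add_distrib, Finset.sum_ite_eq Finset.univ k,
          Finset.sum_ite_eq Finset.univ l, ← Finset.sum_mul, hp_sum]
        simp; ring
    rw [hT, hA k l]
    by_cases hkl : k = l
    · subst hkl
      rw [if_pos rfl, if_pos rfl]
      rw [div_mul_eq_mul_div, mul_div_assoc', mul_div_cancel_left₀ _ (hdiag k)]
      ring
    · rw [if_neg hkl, if_neg hkl]
      rw [div_mul_eq_mul_div, mul_div_assoc', mul_div_cancel_left₀ _ (hoff k l hkl)]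

  calc ∑ i, p i * ((Pi.single i 1 - c) ⬝ᵥ A.mulVec (Pi.single i 1 - c))
      = ∑ k, ∑ l, (∑ i, p i * ((if k = i then (1:ℝ) else 0) - c k)
          * ((if l = i then (1:ℝ) else 0) - c l)) * A k l := by
        simp only [dotProduct, Matrix.mulVec, Pi.sub_apply, Pi.single_apply,
          Finset.mul_sum, Finset.sum_mul]
        rw [Finset.sum_comm]
        refine Finset.sum_congr rfl fun k _ => ?_
        rw [Finset.sum_comm]
        refine Finset.sum_congr rfl fun l _ => Finset.sum_congr rfl fun i _ => ?_
        ring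
    _ = ∑ k, ∑ l, (p k - c k) * (p l - c l) * Q k l := by
        exact Finset.sum_congr rfl fun k _ => Finset.sum_congr rfl fun l _ => key k l
    _ = (p - c) ⬝ᵥ Q.mulVec (p - c) := by
        simp only [dotProduct, Matrix.mulVec, Pi.sub_apply, Finset.mul_sum]
        refine Finset.sum_congr rfl fun k _ => Finset.sum_congr rfl fun l _ => ?_
        ring
end

section
/- Let n ≥ 1, θ ∈ ℝⁿ, and let G₁, …, G_n be independent standard Gumbel random variables. Then almost surely the maximizer of i ↦ θ_i + G_i is unique, and for every j ∈ {1, …, n}, P(θ_j + G_j > θ_i + G_i for all i ≠ j) = exp(θ_j) / Σ_{i=1}^n exp(θ_i). (This is the Gumbel-max trick underlying the coupling D = limit of softmax_τ(θ + G) used to define the straight-through Gumbel-Softmax and Gumbel-Rao estimators.) -/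
open MeasureTheory ProbabilityTheory Set Real

/-!
Conditionally on `G j = x`, independence turns the event that `j` is the strict argmax of `θ + G`
into a product: its probability is `∏_{i ≠ j} F (x - (θ i - θ j))`, where `F` is the Gumbel CDF.
Max-stability, `F (x - b) = F x ^ exp b`, collapses this to `F x ^ c` with
`c = ∑_{i ≠ j} exp (θ i - θ j)`. Since `F (G j)` is uniform on `(0, 1)`, the probability is
`∫₀¹ u ^ c du = 1 / (1 + c) = exp (θ j) / ∑ i, exp (θ i)`. These disjoint events have total
probability one, so almost surely exactly one of them occurs.
-/

noncomputable def gumbelCDF (x : ℝ) : ℝ := exp (-exp (-x))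

noncomputable def gumbelQuantile (u : ℝ) : ℝ := -log (-log u)

/-- The Gumbel law, realised by inverse transform sampling from the uniform law on `(0, 1)`. -/
noncomputable def gumbelMeasure : Measure ℝ := (volume.restrict (Ioo 0 1)).map gumbelQuantile

lemma gumbelCDF_strictMono : StrictMono gumbelCDF :=
  exp_strictMono.comp (exp_strictMono.comp_strictAnti fun _ _ h => neg_lt_neg h).neg

lemma gumbelCDF_pos (x : ℝ) : 0 < gumbelCDF x := exp_pos _

lemma gumbelCDF_lt_one (x : ℝ) : gumbelCDF x < 1 :=
  exp_lt_one_iff.2 (neg_neg_of_pos (exp_pos _))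

lemma gumbelCDF_gumbelQuantile {u : ℝ} (hu : u ∈ Ioo 0 1) : gumbelCDF (gumbelQuantile u) = u := by
  rw [gumbelCDF, gumbelQuantile, neg_neg, exp_log (neg_pos.2 (log_neg hu.1 hu.2)), neg_neg,
    exp_log hu.1]

lemma measurable_gumbelQuantile : Measurable gumbelQuantile := by
  unfold gumbelQuantile; fun_prop

lemma gumbelCDF_prod_sub {ι : Type*} (s : Finset ι) (b : ι → ℝ) (x : ℝ) :
    ∏ i ∈ s, gumbelCDF (x - b i) = gumbelCDF x ^ ∑ i ∈ s, exp (b i) := by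
  simp only [gumbelCDF, ← exp_sum, ← exp_mul, Finset.mul_sum]
  congr 1
  refine Finset.sum_congr rfl fun i _ => by rw [neg_sub, sub_eq_add_neg, exp_add]; ring

lemma gumbelQuantile_preimage_Iic (x : ℝ) :
    gumbelQuantile ⁻¹' Iic x ∩ Ioo 0 1 = Ioc 0 (gumbelCDF x) := by
  ext u
  constructor
  · rintro ⟨hux, hu⟩
    refine ⟨hu.1, ?_⟩
    rw [← gumbelCDF_gumbelQuantile hu]
    exact gumbelCDF_strictMono.monotone hux
  · rintro ⟨hu0, hux⟩
    have hu : u ∈ Ioo 0 1 := ⟨hu0, hux.trans_lt (gumbelCDF_lt_one x)⟩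
    refine ⟨?_, hu⟩
    rw [mem_preimage, mem_Iic, ← gumbelCDF_strictMono.le_iff_le, gumbelCDF_gumbelQuantile hu]
    exact hux

lemma gumbelQuantile_preimage_Iio (x : ℝ) :
    gumbelQuantile ⁻¹' Iio x ∩ Ioo 0 1 = Ioo 0 (gumbelCDF x) := by
  ext u
  constructor
  · rintro ⟨hux, hu⟩
    refine ⟨hu.1, ?_⟩
    rw [← gumbelCDF_gumbelQuantile hu]
    exact gumbelCDF_strictMono hux
  · rintro ⟨hu0, hux⟩
    have hu : u ∈ Ioo 0 1 := ⟨hu0, hux.trans (gumbelCDF_lt_one x)⟩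
    refine ⟨?_, hu⟩
    rw [mem_preimage, mem_Iio, ← gumbelCDF_strictMono.lt_iff_lt, gumbelCDF_gumbelQuantile hu]
    exact hux

lemma gumbelMeasure_Iic (x : ℝ) : gumbelMeasure (Iic x) = ENNReal.ofReal (gumbelCDF x) := by
  rw [gumbelMeasure, Measure.map_apply measurable_gumbelQuantile measurableSet_Iic,
    Measure.restrict_apply (measurable_gumbelQuantile measurableSet_Iic),
    gumbelQuantile_preimage_Iic, volume_Ioc, sub_zero]

lemma gumbelMeasure_Iio (x : ℝ) : gumbelMeasure (Iio x) = ENNReal.ofReal (gumbelCDF x) := by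
  rw [gumbelMeasure, Measure.map_apply measurable_gumbelQuantile measurableSet_Iio,
    Measure.restrict_apply (measurable_gumbelQuantile measurableSet_Iio),
    gumbelQuantile_preimage_Iio, volume_Ioo, sub_zero]

lemma map_eq_gumbelMeasure {Ω : Type*} [MeasurableSpace Ω] {μ : Measure Ω} [IsFiniteMeasure μ]
    {X : Ω → ℝ} (hX : Measurable X) (hcdf : ∀ x, μ {ω | X ω ≤ x} = ENNReal.ofReal (gumbelCDF x)) :
    μ.map X = gumbelMeasure :=
  Measure.ext_of_Iic _ _ fun x => by
    rw [Measure.map_apply hX measurableSet_Iic, gumbelMeasure_Iic]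
    exact hcdf x

lemma lintegral_gumbelCDF_rpow {c : ℝ} (hc : -1 < c) :
    ∫⁻ x, ENNReal.ofReal (gumbelCDF x ^ c) ∂gumbelMeasure = ENNReal.ofReal (1 / (c + 1)) := by
  have hint : IntegrableOn (fun u : ℝ => u ^ c) (Ioo 0 1) :=
    ((intervalIntegral.intervalIntegrable_rpow' hc).1).mono_set Ioo_subset_Ioc_self
  rw [gumbelMeasure, lintegral_map (by unfold gumbelCDF; fun_prop) measurable_gumbelQuantile,
    setLIntegral_congr_fun measurableSet_Ioo fun u hu => by rw [gumbelCDF_gumbelQuantile hu],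
    ← ofReal_integral_eq_lintegral_ofReal hint
      ((ae_restrict_iff' measurableSet_Ioo).2 (ae_of_all _ fun u hu => rpow_nonneg hu.1.le c)),
    ← integral_Ioc_eq_integral_Ioo, ← intervalIntegral.integral_of_le zero_le_one,
    integral_rpow (Or.inl hc), one_rpow, zero_rpow (by linarith), sub_zero]

lemma ProbabilityTheory.IndepFun.measure_prodMk_preimage {Ω α β : Type*} [MeasurableSpace Ω]
    [MeasurableSpace α] [MeasurableSpace β] {μ : Measure Ω} [IsFiniteMeasure μ]
    {X : Ω → α} {Y : Ω → β} (hXY : IndepFun X Y μ) (hX : Measurable X) (hY : Measurable Y)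
    {s : Set (α × β)} (hs : MeasurableSet s) :
    μ ((fun ω => (X ω, Y ω)) ⁻¹' s) = ∫⁻ x, μ (Y ⁻¹' (Prod.mk x ⁻¹' s)) ∂μ.map X := by
  rw [← Measure.map_apply (hX.prodMk hY) hs,
    (indepFun_iff_map_prod_eq_prod_map_map hX.aemeasurable hY.aemeasurable).1 hXY,
    Measure.prod_apply hs]
  exact lintegral_congr fun x => Measure.map_apply hY (measurable_prodMk_left hs)

def IsStrictArgmax {ι α : Type*} [Preorder α] (f : ι → α) (j : ι) : Prop :=
  ∀ i, i ≠ j → f i < f j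

lemma IsStrictArgmax.unique {ι α : Type*} [Preorder α] {f : ι → α} {j k : ι}
    (hj : IsStrictArgmax f j) (hk : IsStrictArgmax f k) : j = k := by
  by_contra hjk
  exact lt_asymm (hj k (Ne.symm hjk)) (hk j hjk)

section

variable {Ω ι : Type*} [MeasurableSpace Ω] {μ : Measure Ω}

lemma measurableSet_isStrictArgmax [Countable ι] {f : Ω → ι → ℝ}
    (hf : ∀ i, Measurable fun ω => f ω i) (j : ι) : MeasurableSet {ω | IsStrictArgmax (f ω) j} := by
  simp only [IsStrictArgmax, ofPred_forall]
  exact .iInter fun i => .iInter fun _ => measurableSet_lt (hf i) (hf j)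

lemma ae_exists_mem_of_sum_measure_eq_one [IsProbabilityMeasure μ] [Fintype ι] {A : ι → Set Ω}
    (hA : ∀ i, MeasurableSet (A i)) (hdisj : Pairwise (Function.onFun Disjoint A))
    (hsum : ∑ i, μ (A i) = 1) : ∀ᵐ ω ∂μ, ∃ i, ω ∈ A i := by
  have hunion : μ (⋃ i, A i) = 1 := by rw [measure_iUnion hdisj hA, tsum_fintype, hsum]
  have hae := (ae_mem_iff_measure_eq (MeasurableSet.iUnion hA).nullMeasurableSet).2
    (by rw [hunion, measure_univ])
  simpa only [mem_iUnion] using hae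

lemma measure_isStrictArgmax_add_gumbel [IsFiniteMeasure μ] [Fintype ι] [DecidableEq ι]
    {G : ι → Ω → ℝ} (hmeas : ∀ i, Measurable (G i)) (hindep : iIndepFun G μ)
    (hlaw : ∀ i, μ.map (G i) = gumbelMeasure) (θ : ι → ℝ) (j : ι) :
    μ {ω | IsStrictArgmax (fun i => θ i + G i ω) j}
      = ENNReal.ofReal (exp (θ j) / ∑ i, exp (θ i)) := by
  set S := Finset.univ.erase j
  set c := ∑ i ∈ S, exp (θ i - θ j)
  have hc0 : 0 ≤ c := Finset.sum_nonneg fun i _ => (exp_pos _).le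
  let Y : Ω → S → ℝ := fun ω i => G i ω
  have hY : Measurable Y := measurable_pi_lambda _ fun i => hmeas i
  have hindepY : IndepFun (G j) Y μ :=
    (hindep.indepFun_finset {j} S (Finset.disjoint_singleton_left.2 (Finset.notMem_erase j _))
      hmeas).comp (measurable_pi_apply (⟨j, Finset.mem_singleton_self j⟩ : ({j} : Finset ι)))
      measurable_id
  let E : Set (ℝ × (S → ℝ)) := {p | ∀ i : S, θ i + p.2 i < θ j + p.1}
  have hE : MeasurableSet E := by
    simp only [E, ofPred_forall]
    exact .iInter fun i => measurableSet_lt (by fun_prop) (by fun_prop)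
  have hevent :
      {ω | IsStrictArgmax (fun i => θ i + G i ω) j} = (fun ω => (G j ω, Y ω)) ⁻¹' E := by
    ext ω
    simp only [IsStrictArgmax, mem_ofPred_eq, mem_preimage, E, Y, S, Subtype.forall,
      Finset.mem_erase, Finset.mem_univ, and_true]
  have hslice (x : ℝ) : μ (Y ⁻¹' (Prod.mk x ⁻¹' E)) = ENNReal.ofReal (gumbelCDF x ^ c) := by
    have hY_slice : Y ⁻¹' (Prod.mk x ⁻¹' E) = ⋂ i ∈ S, G i ⁻¹' Iio (x - (θ i - θ j)) := by
      ext ω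
      simp only [mem_preimage, mem_ofPred_eq, mem_iInter, mem_Iio, E, Y, Subtype.forall]
      refine forall₂_congr fun i _ => ?_
      constructor <;> intro h <;> linarith
    rw [hY_slice, hindep.meas_biInter fun i _ => ⟨_, measurableSet_Iio, rfl⟩,
      ← gumbelCDF_prod_sub, ENNReal.ofReal_prod_of_nonneg fun i _ => (gumbelCDF_pos _).le]
    refine Finset.prod_congr rfl fun i _ => ?_
    rw [← Measure.map_apply (hmeas i) measurableSet_Iio, hlaw, gumbelMeasure_Iio]
  have hc : c + 1 = (∑ i, exp (θ i)) / exp (θ j) := by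
    rw [Finset.sum_div, ← Finset.sum_erase_add _ _ (Finset.mem_univ j), div_self (exp_pos _).ne']
    simp only [c, S, exp_sub]
  calc μ {ω | IsStrictArgmax (fun i => θ i + G i ω) j}
      = ∫⁻ x, μ (Y ⁻¹' (Prod.mk x ⁻¹' E)) ∂μ.map (G j) := by
        rw [hevent]; exact hindepY.measure_prodMk_preimage (hmeas j) hY hE
    _ = ∫⁻ x, ENNReal.ofReal (gumbelCDF x ^ c) ∂gumbelMeasure := by simp_rw [hslice, hlaw]
    _ = ENNReal.ofReal (1 / (c + 1)) := lintegral_gumbelCDF_rpow (by linarith)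
    _ = ENNReal.ofReal (exp (θ j) / ∑ i, exp (θ i)) := by rw [hc, one_div_div]

end

/-- **The Gumbel-max trick.** If `G₁, …, G_n` are independent standard Gumbel random
variables (CDF `x ↦ exp (−exp (−x))`), then almost surely the maximizer of `i ↦ θ_i + G_i` is
unique, and for every `j` the probability that `θ_j + G_j` strictly exceeds all the other
`θ_i + G_i` equals `exp θ_j / Σ_i exp θ_i`. -/
theorem gumbel_max_trick {Ω : Type*} {ℱ : MeasurableSpace Ω} (μ : Measure Ω)
    [IsProbabilityMeasure μ] (n : ℕ) (hn : 1 ≤ n) (θ : Fin n → ℝ)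
    (G : Fin n → Ω → ℝ) (hGmeas : ∀ i, Measurable (G i))
    (hGindep : ProbabilityTheory.iIndepFun G μ)
    (hGcdf : ∀ i, ∀ x : ℝ,
      (μ {ω | G i ω ≤ x}).toReal = Real.exp (-Real.exp (-x))) :
    (∀ᵐ ω ∂μ, ∃! j : Fin n, ∀ i, i ≠ j → θ i + G i ω < θ j + G j ω) ∧
    ∀ j : Fin n,
      (μ {ω | ∀ i, i ≠ j → θ i + G i ω < θ j + G j ω}).toReal
        = Real.exp (θ j) / ∑ i, Real.exp (θ i) := by
  have hlaw (i : Fin n) : μ.map (G i) = gumbelMeasure :=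
    map_eq_gumbelMeasure (hGmeas i) fun x => by
      rw [← ENNReal.ofReal_toReal (measure_ne_top μ _), hGcdf i x, gumbelCDF]
  have hprob := measure_isStrictArgmax_add_gumbel hGmeas hGindep hlaw θ
  have hsum_pos : 0 < ∑ i, exp (θ i) :=
    Finset.sum_pos (fun i _ => exp_pos (θ i)) ⟨⟨0, hn⟩, Finset.mem_univ _⟩
  have hsum : ∑ j, μ {ω | IsStrictArgmax (fun i => θ i + G i ω) j} = 1 := by
    rw [Finset.sum_congr rfl fun j _ => hprob j,
      ← ENNReal.ofReal_sum_of_nonneg fun j _ => by positivity, ← Finset.sum_div,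
      div_self hsum_pos.ne', ENNReal.ofReal_one]
  refine ⟨?_, fun j =>
    (congrArg ENNReal.toReal (hprob j)).trans (ENNReal.toReal_ofReal (by positivity))⟩
  filter_upwards [ae_exists_mem_of_sum_measure_eq_one
    (measurableSet_isStrictArgmax fun i => measurable_const.add (hGmeas i))
    (fun j k hjk => disjoint_left.2 fun ω hj hk => hjk (hj.unique hk)) hsum] with ω ⟨j, hj⟩
  exact ⟨j, hj, fun k hk => IsStrictArgmax.unique hk hj⟩
end

section
/- Let n ≥ 1, θ ∈ ℝⁿ, and let G₁, …, G_n be independent standard Gumbel random variables. Then the maximum value max_{1 ≤ i ≤ n} (θ_i + G_i) and the (almost surely unique) maximizing index argmax_{1 ≤ i ≤ n} (θ_i + G_i) are independent random variables. (This independence property underlies the closed-form reparameterization of θ + G given the discrete outcome D used by the Gumbel-Rao Monte Carlo estimator.) -/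
open MeasureTheory ProbabilityTheory Set Filter Topology
open scoped ENNReal

/-!
With `c i = exp (θ i)`, the variable `X i = θ i + G i` has CDF `F_{c i}(x) = exp (-c i * exp (-x))`,
and these CDFs multiply by adding the parameters. Conditioning on `X j = x`, the probability that
the maximum is at most `t` and attained at `j` is `∫_{x ≤ t} f_{c j}(x) ∏_{i ≠ j} F_{c i}(x) dx`;
since `f_{c j} · F_{S - c j} = (c j / S) · f_S` with `S = ∑ c i`, it equals `(c j / S) · F_S(t)`.
The joint law of maximum and argmax thus factors, and letting `t → ∞` identifies the factors.
-/

/-- CDF of the Gumbel law with location `log c`. -/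
noncomputable def gumbelCDFReal (c x : ℝ) : ℝ := Real.exp (-(c * Real.exp (-x)))

noncomputable def gumbelPDFReal (c x : ℝ) : ℝ := c * Real.exp (-x) * gumbelCDFReal c x

lemma gumbelCDFReal_nonneg (c x : ℝ) : 0 ≤ gumbelCDFReal c x := (Real.exp_pos _).le

lemma gumbelPDFReal_nonneg {c : ℝ} (hc : 0 ≤ c) (x : ℝ) : 0 ≤ gumbelPDFReal c x := by
  unfold gumbelPDFReal
  exact mul_nonneg (mul_nonneg hc (Real.exp_pos _).le) (gumbelCDFReal_nonneg c x)

lemma continuous_gumbelCDFReal (c : ℝ) : Continuous (gumbelCDFReal c) := by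
  unfold gumbelCDFReal; fun_prop

lemma continuous_gumbelPDFReal (c : ℝ) : Continuous (gumbelPDFReal c) := by
  unfold gumbelPDFReal gumbelCDFReal; fun_prop

lemma prod_gumbelCDFReal {ι : Type*} (s : Finset ι) (c : ι → ℝ) (x : ℝ) :
    ∏ i ∈ s, gumbelCDFReal (c i) x = gumbelCDFReal (∑ i ∈ s, c i) x := by
  simp only [gumbelCDFReal, ← Real.exp_sum, Finset.sum_mul, Finset.sum_neg_distrib]

lemma gumbelPDFReal_mul_gumbelCDFReal {a b : ℝ} (hab : a + b ≠ 0) (x : ℝ) :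
    gumbelPDFReal a x * gumbelCDFReal b x = a / (a + b) * gumbelPDFReal (a + b) x := by
  have hF : gumbelCDFReal a x * gumbelCDFReal b x = gumbelCDFReal (a + b) x := by
    simpa using prod_gumbelCDFReal Finset.univ ![a, b] x
  simp only [gumbelPDFReal, mul_assoc, hF]
  field_simp

lemma hasDerivAt_gumbelCDFReal (c x : ℝ) :
    HasDerivAt (gumbelCDFReal c) (gumbelPDFReal c x) x := by
  have h := (((hasDerivAt_neg x).exp.const_mul c).neg).exp
  convert h using 1
  · rfl
  · simp only [gumbelPDFReal, gumbelCDFReal, Pi.neg_apply]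
    ring

lemma tendsto_gumbelCDFReal_atBot {c : ℝ} (hc : 0 < c) :
    Tendsto (gumbelCDFReal c) atBot (𝓝 0) :=
  Real.tendsto_exp_atBot.comp <| tendsto_neg_atTop_atBot.comp <|
    (Real.tendsto_exp_atTop.comp tendsto_neg_atBot_atTop).const_mul_atTop hc

lemma tendsto_gumbelCDFReal_atTop (c : ℝ) : Tendsto (gumbelCDFReal c) atTop (𝓝 1) := by
  have h : Tendsto (fun x ↦ -(c * Real.exp (-x))) atTop (𝓝 0) := by
    simpa using ((Real.tendsto_exp_atBot.comp tendsto_neg_atTop_atBot).const_mul c).neg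
  exact Real.tendsto_exp_nhds_zero_nhds_one.comp h

lemma integral_gumbelPDFReal {c : ℝ} (a t : ℝ) :
    ∫ x in a..t, gumbelPDFReal c x = gumbelCDFReal c t - gumbelCDFReal c a :=
  intervalIntegral.integral_eq_sub_of_hasDerivAt (fun x _ ↦ hasDerivAt_gumbelCDFReal c x)
    ((continuous_gumbelPDFReal c).intervalIntegrable _ _)

lemma integrableOn_gumbelPDFReal_Iic {c : ℝ} (hc : 0 < c) (t : ℝ) :
    IntegrableOn (gumbelPDFReal c) (Iic t) := by
  refine integrableOn_Iic_of_intervalIntegral_norm_tendsto (gumbelCDFReal c t) t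
    (fun _ ↦ (continuous_gumbelPDFReal c).integrableOn_Ioc) tendsto_id ?_
  simp_rw [Real.norm_of_nonneg (gumbelPDFReal_nonneg hc.le _), integral_gumbelPDFReal]
  simpa using (tendsto_gumbelCDFReal_atBot hc).const_sub (gumbelCDFReal c t)

lemma lintegral_gumbelPDFReal_Iic {c : ℝ} (hc : 0 < c) (t : ℝ) :
    ∫⁻ x in Iic t, ENNReal.ofReal (gumbelPDFReal c x) = ENNReal.ofReal (gumbelCDFReal c t) := by
  rw [← ofReal_integral_eq_lintegral_ofReal (integrableOn_gumbelPDFReal_Iic hc t)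
    (ae_of_all _ (gumbelPDFReal_nonneg hc.le)),
    integral_Iic_of_hasDerivAt_of_tendsto' (fun x _ ↦ hasDerivAt_gumbelCDFReal c x)
      (integrableOn_gumbelPDFReal_Iic hc t) (tendsto_gumbelCDFReal_atBot hc), sub_zero]

lemma lintegral_gumbelPDFReal_mul_gumbelCDFReal_Iic {a b : ℝ} (ha : 0 < a) (hb : 0 ≤ b)
    (t : ℝ) :
    ∫⁻ x in Iic t, ENNReal.ofReal (gumbelPDFReal a x) * ENNReal.ofReal (gumbelCDFReal b x)
      = ENNReal.ofReal (a / (a + b)) * ENNReal.ofReal (gumbelCDFReal (a + b) t) := by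
  have hab : 0 < a + b := by linarith
  simp_rw [← ENNReal.ofReal_mul (gumbelPDFReal_nonneg ha.le _),
    gumbelPDFReal_mul_gumbelCDFReal hab.ne', ENNReal.ofReal_mul (by positivity : 0 ≤ a / (a + b))]
  rw [lintegral_const_mul _ (continuous_gumbelPDFReal _).measurable.ennreal_ofReal,
    lintegral_gumbelPDFReal_Iic hab]

section GumbelLaw

variable {Ω : Type*} [MeasurableSpace Ω] {μ : Measure Ω} {X : Ω → ℝ} {c : ℝ}

lemma map_eq_withDensity_gumbelPDFReal [IsFiniteMeasure μ] (hc : 0 < c) (hX : Measurable X)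
    (hcdf : ∀ x, μ (X ⁻¹' Iic x) = ENNReal.ofReal (gumbelCDFReal c x)) :
    μ.map X = volume.withDensity fun x ↦ ENNReal.ofReal (gumbelPDFReal c x) := by
  refine Measure.ext_of_Iic _ _ fun t ↦ ?_
  rw [Measure.map_apply hX measurableSet_Iic, withDensity_apply _ measurableSet_Iic,
    lintegral_gumbelPDFReal_Iic hc, hcdf]

lemma measure_preimage_Iio_eq_gumbelCDFReal [IsFiniteMeasure μ] (hc : 0 < c) (hX : Measurable X)
    (hcdf : ∀ x, μ (X ⁻¹' Iic x) = ENNReal.ofReal (gumbelCDFReal c x)) (x : ℝ) :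
    μ (X ⁻¹' Iio x) = ENNReal.ofReal (gumbelCDFReal c x) := by
  have hac : μ.map X ≪ volume := by
    rw [map_eq_withDensity_gumbelPDFReal hc hX hcdf]
    exact withDensity_absolutelyContinuous _ _
  rw [← hcdf, ← Measure.map_apply hX measurableSet_Iio, ← Measure.map_apply hX measurableSet_Iic]
  exact measure_congr (hac.ae_eq Iio_ae_eq_Iic)

end GumbelLaw

section Independence

variable {Ω α β ι : Type*} [MeasurableSpace Ω] [MeasurableSpace α] [MeasurableSpace β]
  {μ : Measure Ω}

lemma ProbabilityTheory.IndepFun.measure_prodMk_mem_eq_lintegral [IsFiniteMeasure μ]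
    {X : Ω → α} {Y : Ω → β} (h : IndepFun X Y μ) (hX : Measurable X) (hY : Measurable Y)
    {E : Set (α × β)} (hE : MeasurableSet E) :
    μ {ω | (X ω, Y ω) ∈ E} = ∫⁻ x, μ {ω | (x, Y ω) ∈ E} ∂(μ.map X) := by
  change μ ((fun ω ↦ (X ω, Y ω)) ⁻¹' E) = _
  rw [← Measure.map_apply (hX.prodMk hY) hE,
    (indepFun_iff_map_prod_eq_prod_map_map hX.aemeasurable hY.aemeasurable).mp h,
    Measure.prod_apply hE]
  refine lintegral_congr fun x ↦ ?_
  rw [Measure.map_apply hY (measurable_prodMk_left hE)]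
  rfl

lemma ProbabilityTheory.iIndepFun.measure_mem_and_forall_lt [Fintype ι] [DecidableEq ι]
    {X : ι → Ω → ℝ} (h : iIndepFun X μ) (hX : ∀ i, Measurable (X i)) (j : ι) {s : Set ℝ}
    (hs : MeasurableSet s) :
    μ {ω | X j ω ∈ s ∧ ∀ i ≠ j, X i ω < X j ω}
      = ∫⁻ x in s, ∏ i ∈ Finset.univ.erase j, μ (X i ⁻¹' Iio x) ∂(μ.map (X j)) := by
  have := h.isProbabilityMeasure
  set T := Finset.univ.erase j
  let Y : Ω → T → ℝ := fun ω i ↦ X i ω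
  have hY : Measurable Y := measurable_pi_lambda _ fun i ↦ hX i
  have hXY : IndepFun (X j) Y μ := by
    exact (h.indepFun_finset {j} T (Finset.disjoint_singleton_left.mpr (Finset.notMem_erase j _))
      hX).comp (measurable_pi_apply ⟨j, Finset.mem_singleton_self j⟩) measurable_id
  let E : Set (ℝ × (T → ℝ)) := {p | p.1 ∈ s ∧ ∀ i, p.2 i < p.1}
  have hE : MeasurableSet E := by
    have : E = Prod.fst ⁻¹' s ∩ ⋂ i, {p : ℝ × (T → ℝ) | p.2 i < p.1} := by ext; simp [E]
    rw [this]
    exact (measurable_fst hs).inter <| .iInter fun i ↦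
      measurableSet_lt ((measurable_pi_apply i).comp measurable_snd) measurable_fst
  have hslice (x : ℝ) : μ {ω | (x, Y ω) ∈ E}
      = s.indicator (fun x ↦ ∏ i ∈ T, μ (X i ⁻¹' Iio x)) x := by
    by_cases hx : x ∈ s
    · rw [indicator_of_mem hx, ← iIndepFun_iff_measure_inter_preimage_eq_mul.mp h T
        fun _ _ ↦ measurableSet_Iio]
      congr 1
      ext ω
      simp [E, Y, T, hx]
    · simp [E, hx]
  calc μ {ω | X j ω ∈ s ∧ ∀ i ≠ j, X i ω < X j ω} = μ {ω | (X j ω, Y ω) ∈ E} := by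
        congr 1
        ext ω
        simp [E, Y, T]
    _ = ∫⁻ x, μ {ω | (x, Y ω) ∈ E} ∂(μ.map (X j)) :=
        hXY.measure_prodMk_mem_eq_lintegral (hX j) hY hE
    _ = _ := by simp_rw [hslice, lintegral_indicator hs]

end Independence

section FactorizedLaw
variable {Ω ι : Type*} [MeasurableSpace Ω] {μ : Measure Ω} [Countable ι] [MeasurableSpace ι]
  [MeasurableSingletonClass ι] {M : Ω → ℝ} {J : Ω → ι}

lemma measure_inter_preimage_eq_tsum (hJ : Measurable J) (A : Set Ω) (hA : MeasurableSet A)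
    (T : Set ι) : μ (A ∩ J ⁻¹' T) = ∑' j : T, μ (A ∩ J ⁻¹' {(j : ι)}) := by
  simp_rw [inter_comm A, ← Measure.restrict_apply' hA]
  exact (tsum_measure_preimage_singleton T.to_countable
    fun j _ ↦ hJ (measurableSet_singleton j)).symm

lemma indepFun_of_measure_Iic_inter_singleton [IsFiniteMeasure μ] (hM : Measurable M)
    (hJ : Measurable J)
    (h : ∀ t j, μ (M ⁻¹' Iic t ∩ J ⁻¹' {j}) = μ (M ⁻¹' Iic t) * μ (J ⁻¹' {j})) :
    IndepFun M J μ := by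
  have hfiber (j : ι) : (μ.restrict (J ⁻¹' {j})).map M = μ (J ⁻¹' {j}) • μ.map M := by
    refine Measure.ext_of_Iic _ _ fun t ↦ ?_
    rw [Measure.map_apply hM measurableSet_Iic, Measure.restrict_apply (hM measurableSet_Iic),
      Measure.smul_apply, Measure.map_apply hM measurableSet_Iic, h, smul_eq_mul, mul_comm]
  rw [indepFun_iff_measure_inter_preimage_eq_mul]
  intro s T hs _
  have hfiber_apply (j : ι) : μ (M ⁻¹' s ∩ J ⁻¹' {j}) = μ (M ⁻¹' s) * μ (J ⁻¹' {j}) := by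
    have := congrArg (· s) (hfiber j)
    simpa [Measure.map_apply hM hs, Measure.restrict_apply (hM hs), mul_comm] using this
  calc μ (M ⁻¹' s ∩ J ⁻¹' T) = ∑' j : T, μ (M ⁻¹' s) * μ (univ ∩ J ⁻¹' {(j : ι)}) := by
        rw [measure_inter_preimage_eq_tsum hJ _ (hM hs)]
        simp_rw [hfiber_apply, univ_inter]
    _ = μ (M ⁻¹' s) * μ (J ⁻¹' T) := by
        rw [ENNReal.tsum_mul_left, ← measure_inter_preimage_eq_tsum hJ _ .univ, univ_inter]

lemma indepFun_of_measure_Iic_inter_singleton_eq_mul [IsProbabilityMeasure μ]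
    (hM : Measurable M) (hJ : Measurable J) (p : ι → ℝ≥0∞) {H : ℝ → ℝ≥0∞}
    (hH : Tendsto H atTop (𝓝 1)) (h : ∀ t j, μ (M ⁻¹' Iic t ∩ J ⁻¹' {j}) = p j * H t) :
    IndepFun M J μ := by
  have hJp (j : ι) : μ (J ⁻¹' {j}) = p j := by
    have hlim := tendsto_measure_iUnion_atTop (μ := μ)
      (s := fun t : ℝ ↦ M ⁻¹' Iic t ∩ J ⁻¹' {j})
      fun a b hab ↦ inter_subset_inter_left _ (preimage_mono (Iic_subset_Iic.mpr hab))
    rw [← iUnion_inter, ← preimage_iUnion, iUnion_Iic, preimage_univ, univ_inter] at hlim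
    refine tendsto_nhds_unique hlim ?_
    simpa [Function.comp_def, h] using ENNReal.Tendsto.const_mul hH (Or.inl one_ne_zero)
  have hMH (t : ℝ) : μ (M ⁻¹' Iic t) = H t := by
    calc μ (M ⁻¹' Iic t) = ∑' j : (univ : Set ι), p j * H t := by
          rw [← inter_univ (M ⁻¹' Iic t), ← preimage_univ (f := J),
            measure_inter_preimage_eq_tsum hJ _ (hM measurableSet_Iic)]
          simp_rw [h]
      _ = μ (J ⁻¹' univ) * H t := by
          rw [ENNReal.tsum_mul_right, ← univ_inter (J ⁻¹' univ),
            measure_inter_preimage_eq_tsum hJ _ .univ]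
          simp_rw [univ_inter, hJp]
      _ = H t := by simp
  exact indepFun_of_measure_Iic_inter_singleton hM hJ fun t j ↦ by rw [h, hJp, hMH, mul_comm]

end FactorizedLaw

section GumbelArgmax
variable {Ω ι : Type*} [MeasurableSpace Ω] {μ : Measure Ω}

lemma measure_mem_Iic_and_forall_lt_of_gumbel [Fintype ι] [DecidableEq ι] {X : ι → Ω → ℝ}
    {c : ι → ℝ} (hc : ∀ i, 0 < c i) (h : iIndepFun X μ) (hX : ∀ i, Measurable (X i))
    (hcdf : ∀ i x, μ (X i ⁻¹' Iic x) = ENNReal.ofReal (gumbelCDFReal (c i) x)) (j : ι)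
    (t : ℝ) :
    μ {ω | X j ω ∈ Iic t ∧ ∀ i ≠ j, X i ω < X j ω}
      = ENNReal.ofReal (c j / ∑ i, c i) * ENNReal.ofReal (gumbelCDFReal (∑ i, c i) t) := by
  have := h.isProbabilityMeasure
  have hrest (x : ℝ) : ∏ i ∈ Finset.univ.erase j, μ (X i ⁻¹' Iio x)
      = ENNReal.ofReal (gumbelCDFReal (∑ i ∈ Finset.univ.erase j, c i) x) := by
    simp_rw [measure_preimage_Iio_eq_gumbelCDFReal (hc _) (hX _) (hcdf _),
      ← ENNReal.ofReal_prod_of_nonneg fun i _ ↦ gumbelCDFReal_nonneg _ _, prod_gumbelCDFReal]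
  rw [h.measure_mem_and_forall_lt hX j measurableSet_Iic]
  simp_rw [hrest]
  rw [map_eq_withDensity_gumbelPDFReal (hc j) (hX j) (hcdf j),
    setLIntegral_withDensity_eq_setLIntegral_mul _
      (continuous_gumbelPDFReal _).measurable.ennreal_ofReal
      (continuous_gumbelCDFReal _).measurable.ennreal_ofReal measurableSet_Iic]
  simp only [Pi.mul_apply]
  rw [lintegral_gumbelPDFReal_mul_gumbelCDFReal_Iic (hc j)
    (Finset.sum_nonneg fun i _ ↦ (hc i).le), Finset.add_sum_erase _ _ (Finset.mem_univ j)]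

end GumbelArgmax

lemma iSup_le_and_eq_iff_of_forall_lt {ι : Type*} [Finite ι] {f : ι → ℝ} {k : ι}
    (hk : ∀ i ≠ k, f i < f k) (t : ℝ) (j : ι) :
    (⨆ i, f i ≤ t ∧ k = j) ↔ (f j ≤ t ∧ ∀ i ≠ j, f i < f j) := by
  have : Nonempty ι := ⟨k⟩
  have hsup : ⨆ i, f i = f k := by
    refine le_antisymm (ciSup_le fun i ↦ ?_) (le_ciSup (Set.finite_range f).bddAbove k)
    rcases eq_or_ne i k with rfl | hik
    exacts [le_rfl, (hk i hik).le]
  rw [hsup]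
  constructor
  · rintro ⟨hle, rfl⟩
    exact ⟨hle, hk⟩
  · rintro ⟨hle, hj⟩
    obtain rfl : k = j := by
      by_contra hkj
      exact (hk j (Ne.symm hkj)).asymm (hj k hkj)
    exact ⟨hle, rfl⟩

theorem gumbel_max_argmax_indep_general {Ω : Type*} {ℱ : MeasurableSpace Ω} (μ : Measure Ω)
    [IsProbabilityMeasure μ] (n : ℕ) (θ : Fin n → ℝ)
    (G : Fin n → Ω → ℝ) (hGmeas : ∀ i, Measurable (G i))
    (hGindep : ProbabilityTheory.iIndepFun G μ)
    (hGcdf : ∀ i, ∀ x : ℝ,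
      (μ {ω | G i ω ≤ x}).toReal = Real.exp (-Real.exp (-x)))
    (J : Ω → Fin n) (hJmeas : Measurable J)
    (hJ : ∀ᵐ ω ∂μ, ∀ i, i ≠ J ω → θ i + G i ω < θ (J ω) + G (J ω) ω) :
    ProbabilityTheory.IndepFun (fun ω => ⨆ i : Fin n, (θ i + G i ω)) J μ := by
  set X : Fin n → Ω → ℝ := fun i ω ↦ θ i + G i ω
  set c : Fin n → ℝ := fun i ↦ Real.exp (θ i)
  have hX (i : Fin n) : Measurable (X i) := (hGmeas i).const_add (θ i)
  have hXindep : iIndepFun X μ := hGindep.comp _ fun i ↦ measurable_const_add (θ i)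
  have hXcdf (i : Fin n) (x : ℝ) :
      μ (X i ⁻¹' Iic x) = ENNReal.ofReal (gumbelCDFReal (c i) x) := by
    have hshift : X i ⁻¹' Iic x = {ω | G i ω ≤ x - θ i} := by
      ext ω
      exact (le_sub_iff_add_le' (a := θ i) (b := G i ω)).symm
    rw [hshift, ← ENNReal.ofReal_toReal (measure_ne_top μ _), hGcdf, gumbelCDFReal, neg_sub,
      sub_eq_add_neg, Real.exp_add]
  have hargmax (t : ℝ) (j : Fin n) :
      μ ((fun ω ↦ ⨆ i, X i ω) ⁻¹' Iic t ∩ J ⁻¹' {j})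
        = μ {ω | X j ω ∈ Iic t ∧ ∀ i ≠ j, X i ω < X j ω} := by
    refine measure_congr (eventuallyEq_set.mpr ?_)
    filter_upwards [hJ] with ω hω
    exact iSup_le_and_eq_iff_of_forall_lt hω t j
  refine indepFun_of_measure_Iic_inter_singleton_eq_mul (.iSup hX) hJmeas
    (fun j ↦ ENNReal.ofReal (c j / ∑ i, c i))
    (by simpa using ENNReal.tendsto_ofReal (tendsto_gumbelCDFReal_atTop (∑ i, c i)))
    fun t j ↦ ?_
  rw [hargmax, measure_mem_Iic_and_forall_lt_of_gumbel (fun i ↦ Real.exp_pos _) hXindep hX hXcdf]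

/-- **Independence of the Gumbel maximum and argmax.** If `G₁, …, G_n` are independent
standard Gumbel random variables, then the maximum value `max_i (θ_i + G_i)` and the (almost
surely unique) maximizing index are independent: any measurable `J : Ω → Fin n` that is almost
surely the strict maximizer of `i ↦ θ_i + G_i` is independent of the maximum value. -/
theorem gumbel_max_argmax_indep {Ω : Type*} {ℱ : MeasurableSpace Ω} (μ : Measure Ω)
    [IsProbabilityMeasure μ] (n : ℕ) (hn : 1 ≤ n) (θ : Fin n → ℝ)
    (G : Fin n → Ω → ℝ) (hGmeas : ∀ i, Measurable (G i))
    (hGindep : ProbabilityTheory.iIndepFun G μ)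
    (hGcdf : ∀ i, ∀ x : ℝ,
      (μ {ω | G i ω ≤ x}).toReal = Real.exp (-Real.exp (-x)))
    (J : Ω → Fin n) (hJmeas : Measurable J)
    (hJ : ∀ᵐ ω ∂μ, ∀ i, i ≠ J ω → θ i + G i ω < θ (J ω) + G (J ω) ω) :
    ProbabilityTheory.IndepFun (fun ω => ⨆ i : Fin n, (θ i + G i ω)) J μ :=
  gumbel_max_argmax_indep_general (ℱ := ℱ) μ n θ G hGmeas hGindep hGcdf J hJmeas hJ
end

section
/- Let n ≥ 1, θ ∈ ℝⁿ, and let G₁, …, G_n be independent standard Gumbel random variables. Then almost surely, the limit lim_{τ → 0⁺} softmax_τ(θ + G) exists and equals the one-hot vector e_J, where J is the (almost surely unique) index maximizing i ↦ θ_i + G_i. (This is the almost sure coupling D = lim_{τ→0} S_τ of equation (3) of the paper, relating the discrete sample D to the Gumbel-Softmax relaxation S_τ = softmax_τ(θ + G).) -/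
/-!
The Gumbel law has a continuous distribution function, so it has no atoms, and neither do its
translates `θ_i + G_i`. For independent `X` and `Y` with `Y` atomless, the tie probability
`P(X = Y) = ∫ P(Y = x) dP_X(x)` vanishes. Hence almost surely the `θ_i + G_i` are pairwise
distinct and `i ↦ θ_i + G_i` has a unique maximiser `J`.
Dividing numerator and denominator of the softmax by `exp ((θ_J + G_J) / τ)`, every weight with
`i ≠ J` is `exp (-c / τ)` with `c > 0`, which tends to `0` as `τ → 0⁺`.
-/

open MeasureTheory

/-- The tempered softmax `softmax_τ(x)_i = exp (x_i/τ) / Σ_k exp (x_k/τ)`. -/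
noncomputable def temperedSoftmax {n : ℕ} (τ : ℝ) (x : Fin n → ℝ) : Fin n → ℝ :=
  fun i => Real.exp (x i / τ) / ∑ k, Real.exp (x k / τ)

open ProbabilityTheory Filter Set Function Topology

lemma tendsto_temperedSoftmax_nhdsGT_zero {n : ℕ} {x : Fin n → ℝ} {J : Fin n}
    (hJ : ∀ i, i ≠ J → x i < x J) :
    Tendsto (fun τ => temperedSoftmax τ x) (𝓝[>] 0) (𝓝 (Pi.single J 1)) := by
  have hnormalize : ∀ τ i, temperedSoftmax τ x i =
      Real.exp ((x i - x J) / τ) / ∑ k, Real.exp ((x k - x J) / τ) := by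
    intro τ i
    simp only [temperedSoftmax, sub_div, Real.exp_sub, ← Finset.sum_div]
    rw [div_div_div_cancel_right₀ (Real.exp_ne_zero _)]
  have hweight : ∀ k, Tendsto (fun τ => Real.exp ((x k - x J) / τ)) (𝓝[>] 0)
      (𝓝 ((Pi.single J 1 : Fin n → ℝ) k)) := by
    intro k
    rcases eq_or_ne k J with rfl | hk
    · simp
    · have hgap : Tendsto (fun τ => (x k - x J) / τ) (𝓝[>] 0) atBot := by
        simpa only [div_eq_mul_inv, mul_comm] using
          tendsto_inv_nhdsGT_zero.atTop_mul_const_of_neg (sub_neg.2 (hJ k hk))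
      simpa [Pi.single_apply, hk] using hgap
  have hsum : Tendsto (fun τ => ∑ k, Real.exp ((x k - x J) / τ)) (𝓝[>] 0) (𝓝 1) := by
    simpa using tendsto_finsetSum Finset.univ fun k _ => hweight k
  rw [tendsto_pi_nhds]
  intro i
  simpa only [hnormalize, div_one, Pi.div_def] using (hweight i).div hsum one_ne_zero

lemma exists_forall_ne_lt_of_injective {ι β : Type*} [Finite ι] [Nonempty ι] [LinearOrder β]
    {f : ι → β} (hf : Injective f) : ∃ J, ∀ i, i ≠ J → f i < f J := by
  obtain ⟨J, hJ⟩ := Finite.exists_max f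
  exact ⟨J, fun i hi => (hJ i).lt_of_ne (hf.ne hi)⟩

lemma nullSingletonClass_of_continuous_cdf (ν : Measure ℝ) [IsProbabilityMeasure ν]
    (h : Continuous (cdf ν)) : NullSingletonClass ν where
  measure_singleton a := by
    have hleft : leftLim (cdf ν) a = cdf ν a :=
      leftLim_eq_of_tendsto ((h.tendsto a).mono_left nhdsWithin_le_nhds)
    rw [← measure_cdf ν, StieltjesFunction.measure_singleton, hleft, sub_self,
      ENNReal.ofReal_zero]

lemma nullSingletonClass_map_of_continuous_cdf {Ω : Type*} {_ : MeasurableSpace Ω}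
    {μ : Measure Ω} [IsProbabilityMeasure μ] {X : Ω → ℝ} (hX : Measurable X) {F : ℝ → ℝ}
    (hF : Continuous F) (hcdf : ∀ x, (μ {ω | X ω ≤ x}).toReal = F x) :
    NullSingletonClass (μ.map X) := by
  have := Measure.isProbabilityMeasure_map (μ := μ) hX.aemeasurable
  refine nullSingletonClass_of_continuous_cdf _ ?_
  convert hF using 1
  ext x
  rw [cdf_eq_real, measureReal_def, Measure.map_apply hX measurableSet_Iic]
  exact hcdf x

lemma nullSingletonClass_map_of_injective {α β : Type*} [MeasurableSpace α] [MeasurableSpace β]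
    [MeasurableSingletonClass β] {ν : Measure α} [NullSingletonClass ν] {f : α → β}
    (hf : Measurable f) (hinj : Injective f) : NullSingletonClass (ν.map f) where
  measure_singleton b := by
    rw [Measure.map_apply hf (measurableSet_singleton b)]
    exact (Subsingleton.preimage subsingleton_singleton hinj).measure_zero ν

lemma measure_eq_eq_zero_of_indepFun {Ω α : Type*} {_ : MeasurableSpace Ω} [MeasurableSpace α]
    [MeasurableEq α] {μ : Measure Ω} [IsFiniteMeasure μ]
    {X Y : Ω → α} (hX : Measurable X) (hY : Measurable Y) (hXY : IndepFun X Y μ)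
    [NullSingletonClass (μ.map Y)] : μ {ω | X ω = Y ω} = 0 := by
  have hdiag : MeasurableSet (diagonal α) := measurableSet_diagonal
  have hslice : ∀ x : α, Prod.mk x ⁻¹' diagonal α = {x} := fun x => by
    ext y
    simp [eq_comm]
  calc μ {ω | X ω = Y ω} = μ.map (fun ω => (X ω, Y ω)) (diagonal α) := by
        rw [Measure.map_apply (hX.prodMk hY) hdiag]
        rfl
    _ = ((μ.map X).prod (μ.map Y)) (diagonal α) := by
        rw [(indepFun_iff_map_prod_eq_prod_map_map hX.aemeasurable hY.aemeasurable).1 hXY]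
    _ = 0 := by simp [Measure.prod_apply hdiag, hslice]

lemma ae_injective_of_iIndepFun {Ω ι α : Type*} {_ : MeasurableSpace Ω} [Countable ι]
    [MeasurableSpace α] [MeasurableEq α] {μ : Measure Ω} [IsFiniteMeasure μ] {X : ι → Ω → α}
    (hX : ∀ i, Measurable (X i)) (hXi : iIndepFun X μ)
    (hatom : ∀ i, NullSingletonClass (μ.map (X i))) : ∀ᵐ ω ∂μ, Injective fun i => X i ω := by
  have hpair : ∀ i j, ∀ᵐ ω ∂μ, X i ω = X j ω → i = j := by
    intro i j
    rcases eq_or_ne i j with rfl | hij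
    · exact Eventually.of_forall fun _ _ => rfl
    · have hnull := measure_eq_eq_zero_of_indepFun (hX i) (hX j) (hXi.indepFun hij)
      exact (measure_eq_zero_iff_ae_notMem.1 hnull).mono fun ω hne heq => (hne heq).elim
  simpa only [Injective, ae_all_iff] using hpair

/-- **The almost sure coupling `D = lim_{τ→0} S_τ`** (equation (3) of the paper). If
`G₁, …, G_n` are independent standard Gumbel random variables, then almost surely there is an
index `J` that strictly maximizes `i ↦ θ_i + G_i` (hence is the unique maximizer), and
`softmax_τ(θ + G) → e_J` as `τ → 0⁺`. -/
theorem gumbel_softmax_coupling {Ω : Type*} {ℱ : MeasurableSpace Ω} (μ : Measure Ω)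
    [IsProbabilityMeasure μ] (n : ℕ) (hn : 1 ≤ n) (θ : Fin n → ℝ)
    (G : Fin n → Ω → ℝ) (hGmeas : ∀ i, Measurable (G i))
    (hGindep : ProbabilityTheory.iIndepFun G μ)
    (hGcdf : ∀ i, ∀ x : ℝ,
      (μ {ω | G i ω ≤ x}).toReal = Real.exp (-Real.exp (-x))) :
    ∀ᵐ ω ∂μ, ∃ J : Fin n,
      (∀ i, i ≠ J → θ i + G i ω < θ J + G J ω) ∧
      Filter.Tendsto (fun τ => temperedSoftmax τ (fun i => θ i + G i ω))
        (nhdsWithin 0 (Set.Ioi 0)) (nhds (Pi.single J 1)) := by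
  have hshift : ∀ i, Measurable (θ i + ·) := fun i => measurable_const_add (θ i)
  have hatom : ∀ i, NullSingletonClass (μ.map (fun ω => θ i + G i ω)) := fun i => by
    have := nullSingletonClass_map_of_continuous_cdf (hGmeas i) (by fun_prop) (hGcdf i)
    change NullSingletonClass (μ.map ((θ i + ·) ∘ G i))
    rw [← Measure.map_map (hshift i) (hGmeas i)]
    exact nullSingletonClass_map_of_injective (hshift i) (add_right_injective (θ i))
  have hdistinct := ae_injective_of_iIndepFun (fun i => (hshift i).comp (hGmeas i))
    (hGindep.comp _ hshift) hatom
  have : Nonempty (Fin n) := Fin.pos_iff_nonempty.1 hn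
  filter_upwards [hdistinct] with ω hω
  obtain ⟨J, hJ⟩ := exists_forall_ne_lt_of_injective hω
  exact ⟨J, hJ, tendsto_temperedSoftmax_nhdsGT_zero hJ⟩
end
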